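/- Removing duplicates from a multiset of i.i.d. samples drawn with replacement from a set of distinct tagged items is a sufficient statistic: conditioned on the set of distinct sampled items, the full sample sequence is conditionally independent of the underlying collection of items. -/

import Mathlib

/-- Probability of an event `A` under the probability mass function `P` on a finite
sample space. -/
noncomputable def pr {Ω : Type*} [Fintype Ω] (P : Ω → ℝ) (A : Ω → Prop) [DecidablePred A] : ℝ :=
  ∑ ω ∈ Finset.univ.filter A, P ω

/-- Shannon entropy (in bits) of the random variable `X` under the probability mass
function `P` on a finite sample space. -/
noncomputable def ent {Ω V : Type*} [Fintype Ω] [DecidableEq V] (P : Ω → ℝ) (X : Ω → V) : ℝ :=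
  -∑ v ∈ Finset.univ.image X,
      pr P (fun ω => X ω = v) * Real.logb 2 (pr P (fun ω => X ω = v))

/-- Mutual information (in bits) I(X;Y) = H(X) + H(Y) - H(X,Y). -/
noncomputable def mi {Ω A B : Type*} [Fintype Ω] [DecidableEq A] [DecidableEq B]
    (P : Ω → ℝ) (X : Ω → A) (Y : Ω → B) : ℝ :=
  ent P X + ent P Y - ent P (fun ω => (X ω, Y ω))

/-! Since `S` is a function of `Y`, `I(X;Y) - I(X;S)` is the conditional mutual information
`I(X;Y | S)`, which vanishes once `X` and `Y` are conditionally independent given `S`. For an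
injective `x`, the index vectors `ι` with `x ∘ ι = y` form at most one point, and those with
`image (x ∘ ι) = image y` are in bijection with the sequences `u` with `image u = image y`
(when `image y ⊆ range x`; otherwise both counts vanish). Hence
`P(X = x, S = image y) = #{u | image u = image y} · P(X = x, Y = y)` with a factor independent
of `x`, which is the conditional independence. -/

open Finset

lemma mul_logb_sub_logb_eq {a b c d : ℝ} (ha : 0 ≤ a) (hab : a ≤ b) (hac : a ≤ c)
    (h : a * d = c * b) :
    a * (Real.logb 2 a - Real.logb 2 b) = a * (Real.logb 2 c - Real.logb 2 d) := by
  rcases ha.eq_or_lt with rfl | ha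
  · simp
  have hb : 0 < b := ha.trans_le hab
  have hc : 0 < c := ha.trans_le hac
  have hd : 0 < d := pos_of_mul_pos_right (h ▸ mul_pos hc hb) ha.le
  rw [← Real.logb_div ha.ne' hb.ne', ← Real.logb_div hc.ne' hd.ne',
    (div_eq_div_iff hb.ne' hd.ne').2 h]

section Probability

variable {Ω : Type*} [Fintype Ω] (P : Ω → ℝ)

lemma pr_congr {A B : Ω → Prop} [DecidablePred A] [DecidablePred B] (h : ∀ ω, A ω ↔ B ω) :
    pr P A = pr P B := by
  unfold pr
  rw [filter_congr fun ω _ => h ω]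

lemma pr_nonneg (hP : ∀ ω, 0 ≤ P ω) (A : Ω → Prop) [DecidablePred A] : 0 ≤ pr P A :=
  sum_nonneg fun ω _ => hP ω

lemma pr_mono (hP : ∀ ω, 0 ≤ P ω) {A B : Ω → Prop} [DecidablePred A] [DecidablePred B]
    (h : ∀ ω, A ω → B ω) : pr P A ≤ pr P B :=
  sum_le_sum_of_subset_of_nonneg (monotone_filter_right _ fun ω _ => h ω) fun ω _ _ => hP ω

lemma sum_pr_and_mul {C : Type*} [Fintype C] [DecidableEq C] (E : Ω → Prop) [DecidablePred E]
    (Z : Ω → C) (g : C → ℝ) :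
    ∑ v, pr P (fun ω => E ω ∧ Z ω = v) * g v = ∑ ω ∈ univ.filter E, P ω * g (Z ω) := by
  rw [← sum_fiberwise (univ.filter E) Z]
  refine sum_congr rfl fun v _ => ?_
  rw [pr, filter_filter, sum_mul]
  exact sum_congr rfl fun ω hω => by rw [(mem_filter.1 hω).2.2]

lemma pr_eq_sum_pr_and {A : Type*} [Fintype A] [DecidableEq A] (E : Ω → Prop) [DecidablePred E]
    (X : Ω → A) : pr P E = ∑ x, pr P (fun ω => X ω = x ∧ E ω) := by
  have h := sum_pr_and_mul P E X 1
  simp only [Pi.one_apply, mul_one] at h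
  rw [pr, ← h]
  exact sum_congr rfl fun x _ => pr_congr P fun ω => and_comm

lemma ent_eq_sum {V : Type*} [Fintype V] [DecidableEq V] (Z : Ω → V) :
    ent P Z = -∑ v, pr P (fun ω => Z ω = v) * Real.logb 2 (pr P (fun ω => Z ω = v)) := by
  rw [ent, sum_subset (subset_univ _) fun v _ hv => ?_]
  have hempty : univ.filter (fun ω => Z ω = v) = ∅ :=
    filter_false_of_mem fun ω _ hω => hv (mem_image.2 ⟨ω, mem_univ ω, hω⟩)
  rw [pr, hempty, sum_empty, zero_mul]

lemma ent_pair_sub_ent {A B : Type*} [Fintype A] [Fintype B] [DecidableEq A] [DecidableEq B]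
    (X : Ω → A) (Y : Ω → B) :
    ent P (fun ω => (X ω, Y ω)) - ent P Y
      = -∑ x, ∑ y, pr P (fun ω => X ω = x ∧ Y ω = y) *
          (Real.logb 2 (pr P (fun ω => X ω = x ∧ Y ω = y))
            - Real.logb 2 (pr P (fun ω => Y ω = y))) := by
  have hpair : ∀ x y, pr P (fun ω => (X ω, Y ω) = (x, y)) = pr P (fun ω => X ω = x ∧ Y ω = y) :=
    fun x y => pr_congr P fun ω => Prod.ext_iff
  have hY : ∑ y, pr P (fun ω => Y ω = y) * Real.logb 2 (pr P (fun ω => Y ω = y))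
      = ∑ x, ∑ y, pr P (fun ω => X ω = x ∧ Y ω = y) * Real.logb 2 (pr P (fun ω => Y ω = y)) := by
    rw [sum_comm]
    exact sum_congr rfl fun y _ => by rw [← sum_mul, ← pr_eq_sum_pr_and P _ X]
  rw [ent_eq_sum, ent_eq_sum, Fintype.sum_prod_type, hY]
  simp only [hpair, mul_sub, sum_sub_distrib]
  ring

/-- `X ⊥ Y | f ∘ Y`, cross-multiplied so that no conditioning on a null event occurs. -/
def CondIndepGiven {A B C : Type*} [DecidableEq A] [DecidableEq B] [DecidableEq C]
    (X : Ω → A) (Y : Ω → B) (f : B → C) : Prop :=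
  ∀ x y, pr P (fun ω => X ω = x ∧ Y ω = y) * pr P (fun ω => f (Y ω) = f y)
    = pr P (fun ω => X ω = x ∧ f (Y ω) = f y) * pr P (fun ω => Y ω = y)

lemma condIndepGiven_of_pr_and_comp_eq_mul {A B C : Type*} [Fintype A] [DecidableEq A]
    [DecidableEq B] [DecidableEq C] (X : Ω → A) (Y : Ω → B) (f : B → C) (k : C → ℝ)
    (hk : ∀ x y, pr P (fun ω => X ω = x ∧ f (Y ω) = f y)
      = k (f y) * pr P (fun ω => X ω = x ∧ Y ω = y)) :
    CondIndepGiven P X Y f := by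
  intro x y
  rw [pr_eq_sum_pr_and P (fun ω => f (Y ω) = f y) X, pr_eq_sum_pr_and P (fun ω => Y ω = y) X]
  simp only [hk, ← mul_sum]
  ring

theorem mi_eq_mi_comp_of_condIndepGiven {A B C : Type*} [Fintype A] [Fintype B] [Fintype C]
    [DecidableEq A] [DecidableEq B] [DecidableEq C] (hP : ∀ ω, 0 ≤ P ω)
    (X : Ω → A) (Y : Ω → B) (f : B → C) (hci : CondIndepGiven P X Y f) :
    mi P X Y = mi P X (fun ω => f (Y ω)) := by
  set G : A → C → ℝ := fun x s =>
    Real.logb 2 (pr P (fun ω => X ω = x ∧ f (Y ω) = s))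
      - Real.logb 2 (pr P (fun ω => f (Y ω) = s))
  have hterm : ∀ x y, pr P (fun ω => X ω = x ∧ Y ω = y) *
      (Real.logb 2 (pr P (fun ω => X ω = x ∧ Y ω = y)) - Real.logb 2 (pr P (fun ω => Y ω = y)))
        = pr P (fun ω => X ω = x ∧ Y ω = y) * G x (f y) := fun x y =>
    mul_logb_sub_logb_eq (pr_nonneg P hP _) (pr_mono P hP fun ω h => h.2)
      (pr_mono P hP fun ω h => ⟨h.1, by rw [h.2]⟩) (hci x y)
  have hregroup : ∀ x, ∑ y, pr P (fun ω => X ω = x ∧ Y ω = y) * G x (f y)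
      = ∑ s, pr P (fun ω => X ω = x ∧ f (Y ω) = s) * G x s := fun x => by
    rw [sum_pr_and_mul P _ Y fun y => G x (f y), sum_pr_and_mul P _ (fun ω => f (Y ω)) (G x)]
  have hY := ent_pair_sub_ent P X Y
  have hfY := ent_pair_sub_ent P X fun ω => f (Y ω)
  simp only [hterm, hregroup] at hY
  unfold mi
  linarith

end Probability

lemma pr_fst_eq_and {Ω₀ Ω₁ A : Type*} [Fintype Ω₀] [Fintype Ω₁] [DecidableEq A] (P₀ : Ω₀ → ℝ)
    (m : ℝ) (X : Ω₀ → A) (x : A) (E : A → Ω₁ → Prop) [∀ a, DecidablePred (E a)] :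
    pr (fun p : Ω₀ × Ω₁ => P₀ p.1 / m) (fun p => X p.1 = x ∧ E (X p.1) p.2)
      = pr P₀ (fun ω => X ω = x) * #{ι | E x ι} / m := by
  rw [pr_congr _ fun p => and_congr_right fun h => by rw [h], pr, ← univ_product_univ,
    filter_product (fun ω => X ω = x) (E x), sum_product]
  simp only [sum_const, nsmul_eq_mul, pr, sum_mul, sum_div]
  exact sum_congr rfl fun ω _ => by ring

section Sampling

variable {α β V : Type*} [Fintype α] [Fintype β] [DecidableEq β] [Fintype V] [DecidableEq V]

lemma card_filter_comp_eq_card_filter {x : α → V} (hx : Function.Injective x)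
    (Q : (β → V) → Prop) [DecidablePred Q] :
    #{ι : β → α | Q (fun i => x (ι i))} = #{u : β → V | univ.image u ⊆ univ.image x ∧ Q u} := by
  refine card_bij (fun ι _ => fun i => x (ι i)) (fun ι hι => ?_) (fun ι _ ι' _ h => ?_)
    fun u hu => ?_
  · simp only [mem_filter, mem_univ, true_and] at hι ⊢
    exact ⟨image_subset_iff.2 fun i _ => mem_image_of_mem x (mem_univ _), hι⟩
  · exact funext fun i => hx (congrFun h i)
  · simp only [mem_filter, mem_univ, true_and] at hu
    have hpre : ∀ i, ∃ j, x j = u i := fun i => by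
      simpa using hu.1 (mem_image_of_mem u (mem_univ i))
    choose ι hι using hpre
    obtain rfl : (fun i => x (ι i)) = u := funext hι
    exact ⟨ι, by simpa using hu.2, rfl⟩

lemma card_filter_image_comp_eq {x : α → V} (hx : Function.Injective x) (y : β → V) :
    #{ι : β → α | univ.image (fun i => x (ι i)) = univ.image y}
      = #{u : β → V | univ.image u = univ.image y} * #{ι : β → α | (fun i => x (ι i)) = y} := by
  rw [card_filter_comp_eq_card_filter hx (fun u => univ.image u = univ.image y),
    card_filter_comp_eq_card_filter hx (· = y)]
  by_cases h : univ.image y ⊆ univ.image x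
  · have hS : ∀ u : β → V, univ.image u ⊆ univ.image x ∧ univ.image u = univ.image y
        ↔ univ.image u = univ.image y := fun u => ⟨And.right, fun hu => ⟨hu ▸ h, hu⟩⟩
    have hY : ∀ u : β → V, univ.image u ⊆ univ.image x ∧ u = y ↔ u = y :=
      fun u => ⟨And.right, fun hu => ⟨hu ▸ h, hu⟩⟩
    simp only [hS, hY, filter_eq', mem_univ, if_true, card_singleton, mul_one]
  · have hS : ∀ u : β → V, ¬ (univ.image u ⊆ univ.image x ∧ univ.image u = univ.image y) :=
      fun u hu => h (hu.2 ▸ hu.1)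
    have hY : ∀ u : β → V, ¬ (univ.image u ⊆ univ.image x ∧ u = y) := fun u hu => h (hu.2 ▸ hu.1)
    simp only [hS, hY, filter_false, card_empty, mul_zero]

lemma pr_and_image_eq_card_mul {Ω₀ : Type*} [Fintype Ω₀] (P₀ : Ω₀ → ℝ) (m : ℝ)
    (X : Ω₀ → α → V) (hX : ∀ ω, P₀ ω ≠ 0 → Function.Injective (X ω)) (x : α → V) (y : β → V) :
    pr (fun p : Ω₀ × (β → α) => P₀ p.1 / m)
        (fun p => X p.1 = x ∧ univ.image (fun i => X p.1 (p.2 i)) = univ.image y)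
      = #{u : β → V | univ.image u = univ.image y} *
        pr (fun p : Ω₀ × (β → α) => P₀ p.1 / m)
          (fun p => X p.1 = x ∧ (fun i => X p.1 (p.2 i)) = y) := by
  rw [pr_fst_eq_and P₀ m X x fun (x' : α → V) (ι : β → α) =>
      univ.image (fun i => x' (ι i)) = univ.image y,
    pr_fst_eq_and P₀ m X x fun (x' : α → V) (ι : β → α) => (fun i => x' (ι i)) = y]
  by_cases hq : pr P₀ (fun ω => X ω = x) = 0
  · simp [hq]
  obtain ⟨ω, hω, hne⟩ := exists_ne_zero_of_sum_ne_zero hq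
  have hx : Function.Injective x := (mem_filter.1 hω).2 ▸ hX ω hne
  rw [card_filter_image_comp_eq hx y]
  push_cast
  ring

end Sampling

theorem stmt10_general {Ω₀ V : Type*} [Fintype Ω₀] [Fintype V] [DecidableEq V]
    (M N : ℕ)
    (P₀ : Ω₀ → ℝ) (hP₀ : ∀ ω, 0 ≤ P₀ ω)
    (X : Ω₀ → Fin M → V) (hdist : ∀ ω, P₀ ω ≠ 0 → Function.Injective (X ω)) :
    mi (fun p : Ω₀ × (Fin N → Fin M) => P₀ p.1 / (M : ℝ) ^ N)
        (fun p => X p.1)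
        (fun p => fun i => X p.1 (p.2 i))
      = mi (fun p : Ω₀ × (Fin N → Fin M) => P₀ p.1 / (M : ℝ) ^ N)
        (fun p => X p.1)
        (fun p => Finset.univ.image (fun i => X p.1 (p.2 i))) := by
  have hP : ∀ p : Ω₀ × (Fin N → Fin M), 0 ≤ P₀ p.1 / (M : ℝ) ^ N :=
    fun p => div_nonneg (hP₀ p.1) (by positivity)
  have hci := condIndepGiven_of_pr_and_comp_eq_mul
    (fun p : Ω₀ × (Fin N → Fin M) => P₀ p.1 / (M : ℝ) ^ N) (fun p => X p.1)
    (fun p i => X p.1 (p.2 i)) (fun y : Fin N → V => univ.image y)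
    (fun s => (#{u : Fin N → V | univ.image u = s} : ℝ))
    (pr_and_image_eq_card_mul P₀ _ X hdist)
  exact mi_eq_mi_comp_of_condIndepGiven _ hP (fun p => X p.1) (fun p i => X p.1 (p.2 i))
    (fun y : Fin N → V => univ.image y) hci

/-- Removing duplicates from i.i.d. samples (with replacement) of a collection of
a.s. distinct tagged items is a sufficient statistic: the information the samples
Y = (x_{I_1},...,x_{I_N}) carry about X = (x_1,...,x_M) is the same as that carried
by the set S of distinct sampled values, i.e. I(X;Y) = I(X;S). The sample space is
Ω₀ × (Fin N → Fin M), with the indices uniform and independent of X. -/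
theorem stmt10 {Ω₀ V : Type*} [Fintype Ω₀] [Fintype V] [DecidableEq V]
    (M N : ℕ) (hM : 1 ≤ M) (hN : 1 ≤ N)
    (P₀ : Ω₀ → ℝ) (hP₀ : ∀ ω, 0 ≤ P₀ ω) (hsum : ∑ ω, P₀ ω = 1)
    (X : Ω₀ → Fin M → V) (hdist : ∀ ω, P₀ ω ≠ 0 → Function.Injective (X ω)) :
    mi (fun p : Ω₀ × (Fin N → Fin M) => P₀ p.1 / (M : ℝ) ^ N)
        (fun p => X p.1)
        (fun p => fun i => X p.1 (p.2 i))
      = mi (fun p : Ω₀ × (Fin N → Fin M) => P₀ p.1 / (M : ℝ) ^ N)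
        (fun p => X p.1)
        (fun p => Finset.univ.image (fun i => X p.1 (p.2 i))) :=
  stmt10_general M N P₀ hP₀ X hdist
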